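/- Under the hypotheses of the preceding limit lemma (namely $(v_n)\in\mathcal{GS}(v^*)$, $(\beta_n)\in\mathcal{GS}(-\beta)$ with $\beta\in(1/2,1]$, $\beta_n\in(0,1)$, $\xi=\lim (n\beta_n)^{-1}$ finite, $m-v^*\xi>0$), for every positive sequence $(\alpha_n)$ with $\lim_{n\to\infty}\alpha_n=0$ and every $\delta\in\mathbb{R}$, one has $\lim_{n\to\infty} v_n Q_n^m\left[\sum_{k=1}^n Q_k^{-m}\frac{\beta_k}{v_k}\alpha_k+\delta\right]=0$. -/

import Mathlib

/-
Put `w n = v n * Q n ^ m`, so that `w (n + 1) / w n = v (n + 1) / v n * (1 - β (n + 1)) ^ m`.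
Expanding `(1 - β) ^ m = 1 - m β + o(β)` and `v (n + 1) / v n = 1 + v* / n + o(1 / n)` with
`1 / n ~ ξ β n` gives `(1 - w (n + 1) / w n) / β (n + 1) → m - v* ξ > 0`. Hence `w` decreases
eventually by a factor `1 - c β (n + 1)` with `c > 0`; as `β n ≥ C / n`, this forces `w n → 0`,
and it makes the increments of `1 / w n` dominate `c β n / w n`. Since `α n → 0`, a Stolz–Cesàro
comparison then gives `w n * ∑ k ≤ n, α k β k / w k → 0`.
-/

open Filter Finset Real

def GS (γ : ℝ) (v : ℕ → ℝ) : Prop :=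
  (∀ n, 0 < v n) ∧
    Tendsto (fun n : ℕ => (n : ℝ) * (1 - v (n - 1) / v n)) atTop (nhds γ)

open Topology

lemma tendsto_zero_of_le_mul_one_sub {f r : ℕ → ℝ} {C : ℝ} (hf : ∀ n, 0 ≤ f n) (hC : 0 < C)
    (hfr : ∀ᶠ n in atTop, f (n + 1) ≤ f n * (1 - r (n + 1)))
    (hr : ∀ᶠ n : ℕ in atTop, C / n ≤ r n) :
    Tendsto f atTop (𝓝 0) := by
  set H : ℕ → ℝ := fun n => ∑ i ∈ range n, 1 / ((i : ℝ) + 1)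
  obtain ⟨N, hN⟩ := eventually_atTop.mp (hfr.and ((tendsto_add_atTop_nat 1).eventually hr))
  have hstep : ∀ n ≥ N, f (n + 1) * exp (C * (1 / ((n : ℝ) + 1))) ≤ f n := by
    intro n hn
    obtain ⟨hfn, hrn⟩ := hN n hn
    push_cast at hrn
    rw [← le_div_iff₀ (exp_pos _), div_eq_mul_inv, ← exp_neg, mul_one_div]
    calc f (n + 1) ≤ f n * (1 - r (n + 1)) := hfn
      _ ≤ f n * exp (-r (n + 1)) := mul_le_mul_of_nonneg_left (one_sub_le_exp_neg _) (hf n)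
      _ ≤ f n * exp (-(C / ((n : ℝ) + 1))) := by gcongr; exact hf n
  have hbound : ∀ n ≥ N, f n * exp (C * H n) ≤ f N * exp (C * H N) := by
    intro n hn
    induction n, hn using Nat.le_induction with
    | base => rfl
    | succ n hn ih =>
      calc f (n + 1) * exp (C * H (n + 1))
          = f (n + 1) * exp (C * (1 / ((n : ℝ) + 1))) * exp (C * H n) := by
            simp only [H, sum_range_succ, mul_add, exp_add]; ring
        _ ≤ f n * exp (C * H n) := by gcongr; exact hstep n hn
        _ ≤ f N * exp (C * H N) := ih
  have hdecay : Tendsto (fun n => f N * exp (C * H N) * exp (-(C * H n))) atTop (𝓝 0) := by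
    simpa [H] using (tendsto_exp_neg_atTop_nhds_zero.comp
      (tendsto_sum_range_one_div_nat_succ_atTop.const_mul_atTop hC)).const_mul (f N * exp (C * H N))
  refine squeeze_zero' (Eventually.of_forall hf) ?_ hdecay
  filter_upwards [eventually_ge_atTop N] with n hn
  rw [exp_neg, ← div_eq_mul_inv, le_div_iff₀ (exp_pos _)]
  exact hbound n hn

namespace GS

variable {γ : ℝ} {v : ℕ → ℝ}

lemma tendsto_succ (h : GS γ v) :
    Tendsto (fun n : ℕ => ((n : ℝ) + 1) * (1 - v n / v (n + 1))) atTop (𝓝 γ) := by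
  refine (h.2.comp (tendsto_add_atTop_nat 1)).congr fun n => ?_
  simp

lemma tendsto_div_succ (h : GS γ v) : Tendsto (fun n => v (n + 1) / v n) atTop (𝓝 1) := by
  have hinv : Tendsto (fun n : ℕ => ((n : ℝ) + 1)⁻¹) atTop (𝓝 0) :=
    tendsto_inv_atTop_zero.comp (tendsto_natCast_atTop_atTop.atTop_add tendsto_const_nhds)
  have hpred : Tendsto (fun n => v n / v (n + 1)) atTop (𝓝 1) := by
    have := tendsto_const_nhds (x := (1 : ℝ)) |>.sub (h.tendsto_succ.mul hinv)
    rw [mul_zero, sub_zero] at this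
    refine this.congr fun n => ?_
    field_simp
    ring
  simpa using hpred.inv₀ one_ne_zero

lemma tendsto_zero (h : GS γ v) (hγ : γ < 0) : Tendsto v atTop (𝓝 0) := by
  refine tendsto_zero_of_le_mul_one_sub (r := fun n => -γ / 4 / n) (C := -γ / 4)
    (fun n => (h.1 n).le) (by linarith) ?_ (Eventually.of_forall fun _ => le_rfl)
  filter_upwards [h.tendsto_succ.eventually_lt_const (by linarith : γ < γ / 2),
    eventually_ge_atTop ⌈-γ⌉₊] with n hlt hn
  have hn' : -γ ≤ n := Nat.ceil_le.mp hn
  have hp := h.1 n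
  have hq := h.1 (n + 1)
  set t : ℝ := (n : ℝ) + 1
  have ht : 0 < t := by positivity
  have hratio : (t - γ / 2) * v (n + 1) < t * v n := by
    have e : t * (1 - v n / v (n + 1)) * v (n + 1) = t * v (n + 1) - t * v n := by
      field_simp
    nlinarith [mul_lt_mul_of_pos_right hlt hq]
  have e : v n * (1 - -γ / 4 / t) = v n * (t + γ / 4) / t := by field_simp; ring
  push_cast
  rw [e, le_div_iff₀ ht]
  have hγt : 0 < t + γ / 4 := by linarith
  nlinarith [mul_lt_mul_of_pos_right hratio hγt, mul_nonneg (mul_nonneg (neg_nonneg.mpr hγ.le)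
    (by linarith : (0 : ℝ) ≤ t + γ / 2)) hq.le]

end GS

lemma div_le_inv_sub_inv_of_le_mul_one_sub {x y s : ℝ} (hx : 0 < x) (hy : 0 < y)
    (h : y ≤ x * (1 - s)) : s / y ≤ y⁻¹ - x⁻¹ := by
  rw [inv_sub_inv hy.ne' hx.ne', div_le_div_iff₀ hy (mul_pos hy hx)]
  nlinarith

lemma tendsto_mul_sum_of_le_mul_one_sub {w r a : ℕ → ℝ} {c : ℝ} (hw : ∀ n, 0 < w n)
    (hw0 : Tendsto w atTop (𝓝 0)) (hc : 0 < c) (hr : ∀ n, 0 ≤ r n)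
    (hwr : ∀ᶠ n in atTop, w (n + 1) ≤ w n * (1 - c * r (n + 1)))
    (ha : Tendsto a atTop (𝓝 0)) :
    Tendsto (fun n => w n * ∑ k ∈ Icc 1 n, a k * (r k / w k)) atTop (𝓝 0) := by
  set S : ℕ → ℝ := fun n => ∑ k ∈ Icc 1 n, a k * (r k / w k)
  rw [Metric.tendsto_nhds]
  intro ε hε
  have ha' : ∀ᶠ n in atTop, |a (n + 1)| ≤ ε / 2 * c :=
    (tendsto_add_atTop_nat 1).eventually
      ((ha.abs.eventually (ge_mem_nhds (by rw [abs_zero]; positivity : |(0 : ℝ)| < ε / 2 * c))))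
  obtain ⟨N, hN⟩ := eventually_atTop.mp (hwr.and ha')
  have hS : ∀ n ≥ N, |S n| ≤ |S N| + ε / 2 * (w n)⁻¹ := by
    intro n hn
    induction n, hn using Nat.le_induction with
    | base => linarith [mul_pos (half_pos hε) (inv_pos.mpr (hw N))]
    | succ n hn ih =>
      obtain ⟨hwn, han⟩ := hN n hn
      have hinc := div_le_inv_sub_inv_of_le_mul_one_sub (hw n) (hw (n + 1)) hwn
      have hrw : 0 ≤ r (n + 1) / w (n + 1) := div_nonneg (hr _) (hw _).le
      calc |S (n + 1)| ≤ |S n| + |a (n + 1)| * (r (n + 1) / w (n + 1)) := by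
            simp only [S, sum_Icc_succ_top (Nat.le_add_left 1 n)]
            exact (abs_add_le _ _).trans_eq (by rw [abs_mul, abs_of_nonneg hrw])
        _ ≤ |S N| + ε / 2 * (w n)⁻¹ + ε / 2 * (c * r (n + 1) / w (n + 1)) := by
            rw [mul_div_assoc, ← mul_assoc]; gcongr
        _ ≤ |S N| + ε / 2 * (w (n + 1))⁻¹ := by
            linarith [mul_le_mul_of_nonneg_left hinc (half_pos hε).le]
  have hsmall : ∀ᶠ n in atTop, w n * |S N| < ε / 2 := by
    simpa using (hw0.mul_const |S N|).eventually (gt_mem_nhds (by simpa using half_pos hε))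
  filter_upwards [eventually_ge_atTop N, hsmall] with n hn hn'
  rw [dist_zero_right, norm_mul, Real.norm_of_nonneg (hw n).le, Real.norm_eq_abs]
  calc w n * |S n| ≤ w n * |S N| + ε / 2 := by
        have := mul_le_mul_of_nonneg_left (hS n hn) (hw n).le
        rwa [mul_add, mul_left_comm, mul_inv_cancel₀ (hw n).ne', mul_one] at this
    _ < ε := by linarith

lemma tendsto_one_sub_one_sub_rpow_div (m : ℝ) :
    Tendsto (fun x : ℝ => (1 - (1 - x) ^ m) / x) (𝓝[≠] 0) (𝓝 m) := by
  have hderiv : HasDerivAt (fun x : ℝ => (1 - x) ^ m) (-m) 0 := by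
    simpa using ((hasDerivAt_id (0 : ℝ)).const_sub 1).rpow_const (p := m) (by simp)
  have hslope := (hasDerivAt_iff_tendsto_slope.mp hderiv).neg
  rw [neg_neg] at hslope
  refine hslope.congr fun x => ?_
  simp only [slope_def_field, sub_zero, one_rpow]
  rw [← neg_div, neg_sub]

lemma exists_div_le_of_tendsto_inv_mul {β : ℕ → ℝ} {ξ : ℝ} (hβ : ∀ n, 0 < β n)
    (h : Tendsto (fun n : ℕ => ((n : ℝ) * β n)⁻¹) atTop (𝓝 ξ)) :
    ∃ C > 0, ∀ᶠ n : ℕ in atTop, C / n ≤ β n := by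
  refine ⟨(|ξ| + 1)⁻¹, by positivity, ?_⟩
  filter_upwards [h.eventually_lt_const (by linarith [le_abs_self ξ] : ξ < |ξ| + 1),
    eventually_ge_atTop 1] with n hlt hn
  have hn' : (0 : ℝ) < n := by exact_mod_cast hn
  rw [inv_lt_comm₀ (mul_pos hn' (hβ n)) (by positivity)] at hlt
  rw [div_le_iff₀ hn', mul_comm]
  exact hlt.le

lemma tendsto_one_sub_div_mul_rpow_div {v β : ℕ → ℝ} {vstar ξ : ℝ} (m : ℝ) (hv : GS vstar v)
    (hβ : ∀ n, 0 < β n) (hβ0 : Tendsto β atTop (𝓝 0))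
    (hξ : Tendsto (fun n : ℕ => ((n : ℝ) * β n)⁻¹) atTop (𝓝 ξ)) :
    Tendsto (fun n => (1 - v (n + 1) / v n * (1 - β (n + 1)) ^ m) / β (n + 1)) atTop
      (𝓝 (m - vstar * ξ)) := by
  have hβ0' : Tendsto (fun n => β (n + 1)) atTop (𝓝[≠] 0) :=
    tendsto_nhdsWithin_iff.mpr ⟨hβ0.comp (tendsto_add_atTop_nat 1),
      Eventually.of_forall fun n => (hβ (n + 1)).ne'⟩
  have hslope := (tendsto_one_sub_one_sub_rpow_div m).comp hβ0'
  have hξ' : Tendsto (fun n : ℕ => (((n : ℝ) + 1) * β (n + 1))⁻¹) atTop (𝓝 ξ) := by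
    refine (hξ.comp (tendsto_add_atTop_nat 1)).congr fun n => ?_
    simp
  have := (hslope.sub (hv.tendsto_succ.mul hξ')).mul hv.tendsto_div_succ
  rw [mul_one] at this
  refine this.congr fun n => ?_
  have := hv.1 n; have := hv.1 (n + 1); have := hβ (n + 1)
  simp only [Function.comp_apply]
  field_simp
  ring

lemma eventually_le_mul_one_sub_of_tendsto {w r : ℕ → ℝ} {c c' : ℝ} (hw : ∀ n, 0 < w n)
    (hr : ∀ n, 0 < r n) (h : Tendsto (fun n => (1 - w (n + 1) / w n) / r (n + 1)) atTop (𝓝 c))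
    (hc' : c' < c) : ∀ᶠ n in atTop, w (n + 1) ≤ w n * (1 - c' * r (n + 1)) := by
  filter_upwards [h.eventually_const_lt hc'] with n hn
  rw [lt_div_iff₀ (hr _), lt_sub_comm, div_lt_iff₀ (hw n)] at hn
  nlinarith [hw n]

theorem lemma1_part2_general (v β α : ℕ → ℝ) (vstar b ξ m δ : ℝ)
    (hv : GS vstar v) (hβ : GS (-b) β) (hb : b ∈ Set.Ioc (1/2 : ℝ) 1)
    (hβ01 : ∀ n, β n ∈ Set.Ioo (0 : ℝ) 1)
    (hξ : Tendsto (fun n : ℕ => ((n : ℝ) * β n)⁻¹) atTop (nhds ξ))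
    (hmv : 0 < m - vstar * ξ)
    (hα0 : Tendsto α atTop (nhds 0))
    (Q : ℕ → ℝ) (hQ : ∀ n, Q n = ∏ j ∈ Icc 1 n, (1 - β j)) :
    Tendsto (fun n : ℕ =>
        v n * Q n ^ m * ((∑ k ∈ Icc 1 n, Q k ^ (-m) * (β k / v k) * α k) + δ))
      atTop (nhds 0) := by
  have hβpos n : 0 < β n := (hβ01 n).1
  have hQpos n : 0 < Q n := hQ n ▸ prod_pos fun j _ => sub_pos.mpr (hβ01 j).2
  set w : ℕ → ℝ := fun n => v n * Q n ^ m
  have hw n : 0 < w n := mul_pos (hv.1 n) (rpow_pos_of_pos (hQpos n) m)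
  have hw_div n : w (n + 1) / w n = v (n + 1) / v n * (1 - β (n + 1)) ^ m := by
    simp only [w, hQ (n + 1), prod_Icc_succ_top (Nat.le_add_left 1 n), ← hQ n,
      mul_rpow (hQpos n).le (sub_pos.mpr (hβ01 (n + 1)).2).le]
    have := hv.1 n; have := (rpow_pos_of_pos (hQpos n) m).ne'
    field_simp
  have hstep := eventually_le_mul_one_sub_of_tendsto hw hβpos
    ((tendsto_one_sub_div_mul_rpow_div m hv hβpos (hβ.tendsto_zero (by linarith [hb.1])) hξ
      ).congr fun n => by rw [hw_div]) (half_lt_self hmv)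
  obtain ⟨C, hC, hβC⟩ := exists_div_le_of_tendsto_inv_mul hβpos hξ
  have hw0 : Tendsto w atTop (𝓝 0) :=
    tendsto_zero_of_le_mul_one_sub (r := fun n => (m - vstar * ξ) / 2 * β n) (fun n => (hw n).le)
      (mul_pos (half_pos hmv) hC) hstep (hβC.mono fun n hn => by rw [mul_div_assoc]; gcongr)
  have hterm k : Q k ^ (-m) * (β k / v k) * α k = α k * (β k / w k) := by
    have := hv.1 k; have := (rpow_pos_of_pos (hQpos k) m).ne'
    rw [rpow_neg (hQpos k).le]
    simp only [w]
    field_simp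
  simpa [hterm, mul_add] using
    (tendsto_mul_sum_of_le_mul_one_sub hw hw0 (half_pos hmv) (fun n => (hβpos n).le) hstep
      hα0).add (hw0.mul_const δ)

theorem lemma1_part2 (v β α : ℕ → ℝ) (vstar b ξ m δ : ℝ)
    (hv : GS vstar v) (hβ : GS (-b) β) (hb : b ∈ Set.Ioc (1/2 : ℝ) 1)
    (hβ01 : ∀ n, β n ∈ Set.Ioo (0 : ℝ) 1)
    (hξ : Tendsto (fun n : ℕ => ((n : ℝ) * β n)⁻¹) atTop (nhds ξ))
    (hm : 0 < m) (hmv : 0 < m - vstar * ξ)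
    (hα : ∀ n, 0 < α n) (hα0 : Tendsto α atTop (nhds 0))
    (Q : ℕ → ℝ) (hQ : ∀ n, Q n = ∏ j ∈ Icc 1 n, (1 - β j)) :
    Tendsto (fun n : ℕ =>
        v n * Q n ^ m * ((∑ k ∈ Icc 1 n, Q k ^ (-m) * (β k / v k) * α k) + δ))
      atTop (nhds 0) :=
  lemma1_part2_general v β α vstar b ξ m δ hv hβ hb hβ01 hξ hmv hα0 Q hQ
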